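/- arXiv:2306.03113 — 5 statements merged into one kernel-verified Lean document; each statement's English description precedes it below -/
import Mathlib

section
/- Let I ⊆ ℝ₊ be a nonempty nondegenerate interval with 0 ∈ I, and f : I → ℝ be Φ-monotone, where Φ : [0, length(I)] → ℝ₊ is subadditive and concave. Then there exists a nondecreasing function g : I → ℝ such that Φ(x) ≤ g(x) - f(x) ≤ 2Φ(x/2) for all x ∈ I. -/
/-!
Concavity at the midpoint gives `Φ x + Φ (z - x) ≤ 2 Φ (z / 2)`, so with Φ-monotonicity
`f x + Φ x ≤ f z + 2 Φ (z / 2)` whenever `x ≤ z` in `I`. Hence `g u = inf {f z + 2 Φ (z / 2) : z ∈ I, u ≤ z}`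
is an infimum over a shrinking family of sets, thus nondecreasing, and lies between
`f x + Φ x` and its own term at `z = x`.
-/

section InfAbove

variable {α β : Type*} [Preorder α] [ConditionallyCompleteLattice β]

noncomputable def infAbove (I : Set α) (h : α → β) (u : α) : β :=
  sInf (h '' {z | z ∈ I ∧ u ≤ z})

variable {I : Set α} {h : α → β} {x : α}

theorem le_infAbove {b : β} (hx : x ∈ I) (hb : ∀ z ∈ I, x ≤ z → b ≤ h z) :
    b ≤ infAbove I h x :=
  le_csInf ⟨h x, x, ⟨hx, le_rfl⟩, rfl⟩ (by rintro _ ⟨z, ⟨hz, hxz⟩, rfl⟩; exact hb z hz hxz)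

theorem infAbove_le {b : β} (hx : x ∈ I) (hb : ∀ z ∈ I, x ≤ z → b ≤ h z) :
    infAbove I h x ≤ h x :=
  csInf_le ⟨b, by rintro _ ⟨z, ⟨hz, hxz⟩, rfl⟩; exact hb z hz hxz⟩ ⟨x, ⟨hx, le_rfl⟩, rfl⟩

theorem monotoneOn_infAbove {k : α → β} (hk : ∀ x ∈ I, ∀ z ∈ I, x ≤ z → k x ≤ h z) :
    MonotoneOn (infAbove I h) I := by
  intro u hu v hv huv
  refine csInf_le_csInf ⟨k u, ?_⟩ ⟨h v, v, ⟨hv, le_rfl⟩, rfl⟩ ?_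
  · rintro _ ⟨z, ⟨hz, huz⟩, rfl⟩
    exact hk u hu z hz huz
  · rintro _ ⟨z, ⟨hz, hvz⟩, rfl⟩
    exact ⟨z, ⟨hz, huv.trans hvz⟩, rfl⟩

end InfAbove

theorem ConcaveOn.add_le_two_mul_apply_half {s : Set ℝ} {Φ : ℝ → ℝ} (hΦ : ConcaveOn ℝ s Φ)
    {a b : ℝ} (ha : a ∈ s) (hb : b ∈ s) : Φ a + Φ b ≤ 2 * Φ ((a + b) / 2) := by
  have hmid := hΦ.2 ha hb (by norm_num : (0:ℝ) ≤ 1 / 2) (by norm_num : (0:ℝ) ≤ 1 / 2)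
    (by norm_num)
  simp only [smul_eq_mul] at hmid
  rw [show (1 / 2 : ℝ) * a + 1 / 2 * b = (a + b) / 2 by ring] at hmid
  linarith

theorem stmt_4_general (I : Set ℝ) (hpos : I ⊆ Set.Ici (0:ℝ))
    (L : ℝ) (hL : IsLUB I L) (Φ : ℝ → ℝ)
    (hconc : ConcaveOn ℝ (Set.Icc (0:ℝ) L) Φ)
    (f : ℝ → ℝ) (hf : ∀ x ∈ I, ∀ y ∈ I, x ≤ y → f x ≤ f y + Φ (y - x)) :
    ∃ g : ℝ → ℝ, MonotoneOn g I ∧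
      ∀ x ∈ I, Φ x ≤ g x - f x ∧ g x - f x ≤ 2 * Φ (x / 2) := by
  have key : ∀ x ∈ I, ∀ z ∈ I, x ≤ z → f x + Φ x ≤ f z + 2 * Φ (z / 2) := by
    intro x hx z hz hxz
    have hx0 : 0 ≤ x := hpos hx
    have hzL : z ≤ L := hL.1 hz
    have hmid := hconc.add_le_two_mul_apply_half (a := x) (b := z - x)
      ⟨hx0, hL.1 hx⟩ ⟨by linarith, by linarith⟩
    rw [add_sub_cancel] at hmid
    linarith [hf x hx z hz hxz]
  refine ⟨infAbove I (fun z => f z + 2 * Φ (z / 2)), monotoneOn_infAbove key, fun x hx => ?_⟩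
  have hlow := le_infAbove hx (key x hx)
  have hupp := infAbove_le hx (key x hx)
  constructor <;> linarith

theorem stmt_4 (I : Set ℝ) (hI : I.OrdConnected) (h0 : 0 ∈ I) (hpos : I ⊆ Set.Ici (0:ℝ))
    (hnd : ∃ x ∈ I, x ≠ 0) (L : ℝ) (hL : IsLUB I L) (Φ : ℝ → ℝ)
    (hnonneg : ∀ u ∈ Set.Icc (0:ℝ) L, 0 ≤ Φ u)
    (hsub : ∀ u v : ℝ, u ∈ Set.Icc (0:ℝ) L → v ∈ Set.Icc (0:ℝ) L →
      u + v ∈ Set.Icc (0:ℝ) L → Φ (u + v) ≤ Φ u + Φ v)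
    (hconc : ConcaveOn ℝ (Set.Icc (0:ℝ) L) Φ)
    (f : ℝ → ℝ) (hf : ∀ x ∈ I, ∀ y ∈ I, x ≤ y → f x ≤ f y + Φ (y - x)) :
    ∃ g : ℝ → ℝ, MonotoneOn g I ∧
      ∀ x ∈ I, Φ x ≤ g x - f x ∧ g x - f x ≤ 2 * Φ (x / 2) :=
  stmt_4_general I hpos L hL Φ hconc f hf
end

section
/- Let I ⊆ ℝ₊ be a nonempty nondegenerate interval with 0 ∈ I, c > 0, p ∈ (0,1), and let f : I → ℝ satisfy f(x) ≤ f(y) + c(y - x)^p for all x ≤ y in I. Then there exists a nondecreasing function g : I → ℝ with c·x^p ≤ g(x) - f(x) ≤ 2^(1-p)·c·x^p for all x ∈ I. -/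
open scoped NNReal in
lemma key_rpow {p : ℝ} (hp0 : 0 < p) (hp1 : p ≤ 1) {a b : ℝ} (ha : 0 ≤ a) (hb : 0 ≤ b) :
    a ^ p + b ^ p ≤ 2 ^ (1 - p) * (a + b) ^ p := by
  lift a to ℝ≥0 using ha
  lift b to ℝ≥0 using hb
  have h := NNReal.rpow_add_le_mul_rpow_add_rpow (a ^ p) (b ^ p) (p := 1 / p)
    (by rw [le_div_iff₀ hp0]; simpa using hp1)
  have h2 : ∀ x : ℝ≥0, (x ^ p) ^ (1/p : ℝ) = x := by
    intro x
    rw [← NNReal.rpow_mul, mul_one_div, div_self hp0.ne', NNReal.rpow_one]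
  rw [h2, h2] at h
  have h3 := NNReal.rpow_le_rpow h hp0.le
  rw [← NNReal.rpow_mul, one_div, inv_mul_cancel₀ hp0.ne', NNReal.rpow_one,
    NNReal.mul_rpow, ← NNReal.rpow_mul] at h3
  have : (p⁻¹ - 1) * p = 1 - p := by field_simp
  rw [this] at h3
  exact_mod_cast h3
  
theorem stmt_5 (I : Set ℝ) (hI : I.OrdConnected) (h0 : 0 ∈ I) (hpos : I ⊆ Set.Ici (0:ℝ))
    (hnd : ∃ x ∈ I, x ≠ 0) (c p : ℝ) (hc : 0 < c) (hp : p ∈ Set.Ioo (0:ℝ) 1)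
    (f : ℝ → ℝ) (hf : ∀ x ∈ I, ∀ y ∈ I, x ≤ y → f x ≤ f y + c * (y - x) ^ p) :
    ∃ g : ℝ → ℝ, MonotoneOn g I ∧
      ∀ x ∈ I, c * x ^ p ≤ g x - f x ∧ g x - f x ≤ 2 ^ (1 - p) * c * x ^ p := by
  obtain ⟨hp0, hp1⟩ := hp
  set F : ℝ → ℝ := fun y => f y + c * y ^ p with hF
  set g : ℝ → ℝ := fun x => sSup (F '' (I ∩ Set.Iic x)) with hg
  have hub : ∀ x ∈ I, f x + 2 ^ (1 - p) * c * x ^ p ∈ upperBounds (F '' (I ∩ Set.Iic x)) := by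
    rintro x hx z ⟨y, ⟨hyI, hyx⟩, rfl⟩
    have hy0 : 0 ≤ y := hpos hyI
    have hyx' : y ≤ x := hyx
    have h1 : f y ≤ f x + c * (x - y) ^ p := hf y hyI x hx hyx
    have h2 : (x - y) ^ p + y ^ p ≤ 2 ^ (1 - p) * x ^ p := by
      have := key_rpow hp0 hp1.le (a := x - y) (b := y) (by simp only [Set.mem_Iic] at hyx; linarith) hy0
      simpa using this
    have : c * ((x - y) ^ p + y ^ p) ≤ c * (2 ^ (1 - p) * x ^ p) :=
      mul_le_mul_of_nonneg_left h2 hc.le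
    simp only [hF]
    nlinarith
  have hne : ∀ x ∈ I, (F '' (I ∩ Set.Iic x)).Nonempty :=
    fun x hx => ⟨F x, x, ⟨hx, le_refl x⟩, rfl⟩
  have hbdd : ∀ x ∈ I, BddAbove (F '' (I ∩ Set.Iic x)) := fun x hx => ⟨_, hub x hx⟩
  refine ⟨g, ?_, ?_⟩
  · intro x hx y hy hxy
    exact csSup_le_csSup (hbdd y hy) (hne x hx)
      (Set.image_mono (Set.inter_subset_inter_right _ (Set.Iic_subset_Iic.mpr hxy)))
  · intro x hx
    constructor
    · have : F x ≤ g x := le_csSup (hbdd x hx) ⟨x, ⟨hx, le_refl x⟩, rfl⟩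
      simp only [hF] at this
      linarith
    · have : g x ≤ f x + 2 ^ (1 - p) * c * x ^ p := csSup_le (hne x hx) (hub x hx)
      linarith
end

section
/- Let r₁, r₂ ∈ (0,1] and f, g : [a,b] → ℝ be functions of r₁-bounded variation and r₂-bounded variation respectively. Then the pointwise product fg is of max(r₁,r₂)-bounded variation. -/
/-!
A bound on the `r`-variation sums bounds `f` on `[a,b]`, since `|f c - f a| ^ r` is dominated by
the sum over the partition `a ≤ c ≤ b`; say `|f| ≤ F` and `|g| ≤ G`. Over one partition interval
`[x, y]`, `Δ(fg) = f(y) Δg + g(x) Δf`, so for `r = max r₁ r₂ ≤ 1` subadditivity of `t ↦ t ^ r`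
gives `|Δ(fg)| ^ r ≤ F ^ r |Δg| ^ r + G ^ r |Δf| ^ r`. Finally `|Δg| ≤ 2G` and `r₂ ≤ r` give
`|Δg| ^ r ≤ (2G) ^ (r - r₂) |Δg| ^ r₂`, and likewise for `f`; summing over the partition bounds
the `r`-variation sums of `fg` by those of `f` and `g`.
-/

/-- The set of `r`-variation sums of `f` over partitions of `[a,b]`. -/
def rVarSums (r a b : ℝ) (f : ℝ → ℝ) : Set ℝ :=
  {s | ∃ (n : ℕ) (x : ℕ → ℝ), x 0 = a ∧ x n = b ∧ (∀ i, i < n → x i < x (i + 1)) ∧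
    s = ∑ i ∈ Finset.range n, |f (x (i + 1)) - f (x i)| ^ r}

open Finset Set

lemma Real.rpow_le_rpow_sub_mul_rpow {d D r s : ℝ} (hd : 0 ≤ d) (hdD : d ≤ D) (hs : 0 < s)
    (hsr : s ≤ r) : d ^ r ≤ D ^ (r - s) * d ^ s := by
  rcases hd.eq_or_lt with rfl | hd
  · rw [Real.zero_rpow (hs.trans_le hsr).ne', Real.zero_rpow hs.ne', mul_zero]
  · calc d ^ r = d ^ (r - s) * d ^ s := by rw [← Real.rpow_add hd, sub_add_cancel]
      _ ≤ D ^ (r - s) * d ^ s := by gcongr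

lemma abs_mul_sub_mul_le {p p' q q' F G : ℝ} (hp : |p| ≤ F) (hq' : |q'| ≤ G) :
    |p * q - p' * q'| ≤ F * |q - q'| + G * |p - p'| :=
  calc |p * q - p' * q'| = |p * (q - q') + q' * (p - p')| := by ring_nf
    _ ≤ |p| * |q - q'| + |q'| * |p - p'| := by rw [← abs_mul, ← abs_mul]; exact abs_add_le _ _
    _ ≤ F * |q - q'| + G * |p - p'| := by gcongr

lemma rpow_abs_mul_sub_mul_le {r r₁ r₂ F G p p' q q' : ℝ} (hr₁ : 0 < r₁) (hr₂ : 0 < r₂)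
    (hr₁r : r₁ ≤ r) (hr₂r : r₂ ≤ r) (hr : r ≤ 1) (hp : |p| ≤ F) (hp' : |p'| ≤ F)
    (hq : |q| ≤ G) (hq' : |q'| ≤ G) :
    |p * q - p' * q'| ^ r ≤
      F ^ r * (2 * G) ^ (r - r₂) * |q - q'| ^ r₂ + G ^ r * (2 * F) ^ (r - r₁) * |p - p'| ^ r₁ := by
  have hF : 0 ≤ F := (abs_nonneg p).trans hp
  have hG : 0 ≤ G := (abs_nonneg q).trans hq
  have hr0 : 0 ≤ r := hr₁.le.trans hr₁r
  have hΔp : |p - p'| ≤ 2 * F := (abs_sub p p').trans (by linarith)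
  have hΔq : |q - q'| ≤ 2 * G := (abs_sub q q').trans (by linarith)
  calc |p * q - p' * q'| ^ r ≤ (F * |q - q'| + G * |p - p'|) ^ r := by
        gcongr; exact abs_mul_sub_mul_le hp hq'
    _ ≤ (F * |q - q'|) ^ r + (G * |p - p'|) ^ r :=
        Real.rpow_add_le_add_rpow (by positivity) (by positivity) hr0 hr
    _ = F ^ r * |q - q'| ^ r + G ^ r * |p - p'| ^ r := by
        rw [Real.mul_rpow hF (abs_nonneg _), Real.mul_rpow hG (abs_nonneg _)]
    _ ≤ F ^ r * ((2 * G) ^ (r - r₂) * |q - q'| ^ r₂) +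
          G ^ r * ((2 * F) ^ (r - r₁) * |p - p'| ^ r₁) := by
        gcongr
        · exact Real.rpow_le_rpow_sub_mul_rpow (abs_nonneg _) hΔq hr₂ hr₂r
        · exact Real.rpow_le_rpow_sub_mul_rpow (abs_nonneg _) hΔp hr₁ hr₁r
    _ = _ := by ring

namespace rVarSums

variable {r a b : ℝ} {f : ℝ → ℝ}

lemma mem_Icc_of_partition {n : ℕ} {x : ℕ → ℝ} (hx0 : x 0 = a) (hxn : x n = b)
    (hx : ∀ i, i < n → x i < x (i + 1)) {i : ℕ} (hi : i ≤ n) : x i ∈ Icc a b := by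
  have hmono : MonotoneOn x (Set.Iic n) := (strictMonoOn_Iic_of_lt_succ hx).monotoneOn
  exact ⟨hx0 ▸ hmono (Nat.zero_le n) hi (Nat.zero_le i), hxn ▸ hmono hi (le_refl n) hi⟩

lemma rpow_abs_sub_mem (hab : a < b) : |f b - f a| ^ r ∈ rVarSums r a b f :=
  ⟨1, fun i => if i = 0 then a else b, by simp, by simp, by simpa using hab, by simp⟩

lemma rpow_abs_sub_add_rpow_abs_sub_mem {c : ℝ} (hac : a < c) (hcb : c < b) :
    |f c - f a| ^ r + |f b - f c| ^ r ∈ rVarSums r a b f := by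
  refine ⟨2, fun i => if i = 0 then a else if i = 1 then c else b, by simp, by simp, ?_, ?_⟩
  · intro i hi
    interval_cases i <;> simp [hac, hcb]
  · simp [Finset.sum_range_succ]

lemma rpow_abs_sub_le_of_mem_upperBounds {M c : ℝ} (hr : 0 < r) (hab : a < b)
    (hM : M ∈ upperBounds (rVarSums r a b f)) (hc : c ∈ Icc a b) : |f c - f a| ^ r ≤ M := by
  rcases hc.1.eq_or_lt with rfl | hac
  · rw [sub_self, abs_zero, Real.zero_rpow hr.ne']
    exact (by positivity : 0 ≤ |f b - f a| ^ r).trans (hM (rpow_abs_sub_mem hab))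
  rcases hc.2.eq_or_lt with rfl | hcb
  · exact hM (rpow_abs_sub_mem hab)
  · exact (le_add_of_nonneg_right (by positivity)).trans
      (hM (rpow_abs_sub_add_rpow_abs_sub_mem hac hcb))

lemma exists_abs_le_of_bddAbove (hr : 0 < r) (hab : a < b) (hf : BddAbove (rVarSums r a b f)) :
    ∃ C, ∀ c ∈ Icc a b, |f c| ≤ C := by
  obtain ⟨M, hM⟩ := hf
  have hM0 : 0 ≤ M := (by positivity : 0 ≤ |f b - f a| ^ r).trans (hM (rpow_abs_sub_mem hab))
  refine ⟨|f a| + M ^ r⁻¹, fun c hc => ?_⟩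
  have hdist : |f c - f a| ≤ M ^ r⁻¹ := (Real.le_rpow_inv_iff_of_pos (abs_nonneg _) hM0 hr).2
    (rpow_abs_sub_le_of_mem_upperBounds hr hab hM hc)
  calc |f c| = |f a + (f c - f a)| := by ring_nf
    _ ≤ |f a| + |f c - f a| := abs_add_le _ _
    _ ≤ |f a| + M ^ r⁻¹ := by gcongr

end rVarSums

theorem stmt_9 (r₁ r₂ a b : ℝ) (hr₁ : r₁ ∈ Set.Ioc (0:ℝ) 1) (hr₂ : r₂ ∈ Set.Ioc (0:ℝ) 1)
    (hab : a < b) (f g : ℝ → ℝ)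
    (hf : BddAbove (rVarSums r₁ a b f)) (hg : BddAbove (rVarSums r₂ a b g)) :
    BddAbove (rVarSums (max r₁ r₂) a b (fun x => f x * g x)) := by
  obtain ⟨F, hF⟩ := rVarSums.exists_abs_le_of_bddAbove hr₁.1 hab hf
  obtain ⟨G, hG⟩ := rVarSums.exists_abs_le_of_bddAbove hr₂.1 hab hg
  have hF0 : 0 ≤ F := (abs_nonneg _).trans (hF a (left_mem_Icc.2 hab.le))
  have hG0 : 0 ≤ G := (abs_nonneg _).trans (hG a (left_mem_Icc.2 hab.le))
  obtain ⟨Mf, hMf⟩ := hf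
  obtain ⟨Mg, hMg⟩ := hg
  set r := max r₁ r₂
  refine ⟨F ^ r * (2 * G) ^ (r - r₂) * Mg + G ^ r * (2 * F) ^ (r - r₁) * Mf, ?_⟩
  rintro _ ⟨n, x, hx0, hxn, hx, rfl⟩
  have hmem {i : ℕ} (hi : i ≤ n) := rVarSums.mem_Icc_of_partition hx0 hxn hx hi
  calc ∑ i ∈ range n, |f (x (i + 1)) * g (x (i + 1)) - f (x i) * g (x i)| ^ r
      ≤ ∑ i ∈ range n, (F ^ r * (2 * G) ^ (r - r₂) * |g (x (i + 1)) - g (x i)| ^ r₂ +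
          G ^ r * (2 * F) ^ (r - r₁) * |f (x (i + 1)) - f (x i)| ^ r₁) := by
        refine sum_le_sum fun i hi => ?_
        have hi1 : i + 1 ≤ n := mem_range.1 hi
        exact rpow_abs_mul_sub_mul_le hr₁.1 hr₂.1 (le_max_left _ _) (le_max_right _ _)
          (max_le hr₁.2 hr₂.2) (hF _ (hmem hi1)) (hF _ (hmem (Nat.le_of_succ_le hi1)))
          (hG _ (hmem hi1)) (hG _ (hmem (Nat.le_of_succ_le hi1)))
    _ = F ^ r * (2 * G) ^ (r - r₂) * ∑ i ∈ range n, |g (x (i + 1)) - g (x i)| ^ r₂ +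
          G ^ r * (2 * F) ^ (r - r₁) * ∑ i ∈ range n, |f (x (i + 1)) - f (x i)| ^ r₁ := by
        rw [sum_add_distrib, mul_sum, mul_sum]
    _ ≤ F ^ r * (2 * G) ^ (r - r₂) * Mg + G ^ r * (2 * F) ^ (r - r₁) * Mf := by
        gcongr
        · exact hMg ⟨n, x, hx0, hxn, hx, rfl⟩
        · exact hMf ⟨n, x, hx0, hxn, hx, rfl⟩
end

section
/- Let r ≥ 1 and f : [a,b] → ℝ be of r-bounded variation. Define Φ(u) = sup{ (v_f(x+u) - v_f(x))^{1/r} : x, x+u ∈ [a,b] }, where v_f(x) = V^r_{[a,x]}(f). Then Φ is subadditive on [0, b-a]. -/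
section VariationFunction

variable {r a : ℝ} {f : ℝ → ℝ}

lemma rVarSums_nonempty (f : ℝ → ℝ) {c : ℝ} (hc : a ≤ c) : (rVarSums r a c f).Nonempty := by
  rcases hc.eq_or_lt with rfl | hac
  · exact ⟨0, 0, fun _ => a, rfl, rfl, by simp, by simp⟩
  · refine ⟨|f c - f a| ^ r, 1, fun i => if i = 0 then a else c, by simp, by simp, ?_, by simp⟩
    intro i hi
    obtain rfl : i = 0 := by omega
    simpa using hac

lemma exists_ge_mem_rVarSums_of_le {c d s : ℝ} (hcd : c ≤ d) (hs : s ∈ rVarSums r a c f) :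
    ∃ s' ∈ rVarSums r a d f, s ≤ s' := by
  rcases hcd.eq_or_lt with rfl | hcd
  · exact ⟨s, hs, le_rfl⟩
  obtain ⟨n, x, hx0, hxn, hmono, rfl⟩ := hs
  let y : ℕ → ℝ := fun i => if i ≤ n then x i else d
  have hy : ∀ i < n, y i = x i ∧ y (i + 1) = x (i + 1) := fun i hi => by
    simp only [y, if_pos hi.le, if_pos (Nat.succ_le_of_lt hi), and_self]
  refine ⟨_, ⟨n + 1, y, by simp [y, hx0], by simp [y], ?_, rfl⟩, ?_⟩
  · intro i hi
    rcases (Nat.lt_succ_iff.mp hi).lt_or_eq with hi | rfl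
    · rw [(hy i hi).1, (hy i hi).2]
      exact hmono i hi
    · simp [y, hxn, hcd]
  · rw [Finset.sum_range_succ]
    refine le_add_of_le_of_nonneg (Finset.sum_le_sum fun i hi => ?_) (by positivity)
    rw [(hy i (Finset.mem_range.mp hi)).1, (hy i (Finset.mem_range.mp hi)).2]

lemma BddAbove.rVarSums_of_le {b c : ℝ} (hbv : BddAbove (rVarSums r a b f)) (hcb : c ≤ b) :
    BddAbove (rVarSums r a c f) := by
  obtain ⟨M, hM⟩ := hbv
  refine ⟨M, fun s hs => ?_⟩
  obtain ⟨s', hs', hss'⟩ := exists_ge_mem_rVarSums_of_le hcb hs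
  exact hss'.trans (hM hs')

lemma monotoneOn_sSup_rVarSums {b : ℝ} (hbv : BddAbove (rVarSums r a b f)) :
    MonotoneOn (fun x => sSup (rVarSums r a x f)) (Set.Icc a b) := by
  intro c hc d hd hcd
  refine csSup_le (rVarSums_nonempty f hc.1) fun s hs => ?_
  obtain ⟨s', hs', hss'⟩ := exists_ge_mem_rVarSums_of_le hcd hs
  exact hss'.trans (le_csSup (hbv.rVarSums_of_le hd.2) hs')

end VariationFunction

section Increments

noncomputable def incrementSup (V : ℝ → ℝ) (p a b u : ℝ) : ℝ :=
  sSup {t | ∃ x : ℝ, a ≤ x ∧ x + u ≤ b ∧ t = (V (x + u) - V x) ^ p}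

variable {V : ℝ → ℝ} {p a b : ℝ}

lemma bddAbove_increments (hV : MonotoneOn V (Set.Icc a b)) (hp : 0 ≤ p) {u : ℝ} (hu : 0 ≤ u) :
    BddAbove {t | ∃ x : ℝ, a ≤ x ∧ x + u ≤ b ∧ t = (V (x + u) - V x) ^ p} := by
  refine ⟨(V b - V a) ^ p, ?_⟩
  rintro t ⟨x, hax, hxb, rfl⟩
  have hx : x ∈ Set.Icc a b := ⟨hax, by linarith⟩
  have hxu : x + u ∈ Set.Icc a b := ⟨by linarith, hxb⟩
  have ha : a ∈ Set.Icc a b := ⟨le_rfl, hx.1.trans hx.2⟩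
  have hb : b ∈ Set.Icc a b := ⟨ha.2, le_rfl⟩
  refine Real.rpow_le_rpow (sub_nonneg.mpr (hV hx hxu (by linarith))) ?_ hp
  linarith [hV hxu hb hxb, hV ha hx hax]

lemma le_incrementSup (hV : MonotoneOn V (Set.Icc a b)) (hp : 0 ≤ p) {u x : ℝ} (hu : 0 ≤ u)
    (hax : a ≤ x) (hxb : x + u ≤ b) : (V (x + u) - V x) ^ p ≤ incrementSup V p a b u :=
  le_csSup (bddAbove_increments hV hp hu) ⟨x, hax, hxb, rfl⟩

theorem incrementSup_add_le (hV : MonotoneOn V (Set.Icc a b)) (hp : 0 ≤ p) (hp1 : p ≤ 1)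
    {u v : ℝ} (hu : 0 ≤ u) (hv : 0 ≤ v) (huv : u + v ≤ b - a) :
    incrementSup V p a b (u + v) ≤ incrementSup V p a b u + incrementSup V p a b v := by
  refine csSup_le ⟨_, a, le_rfl, by linarith, rfl⟩ ?_
  rintro t ⟨x, hax, hxb, rfl⟩
  rw [← add_assoc] at hxb ⊢
  have hx : x ∈ Set.Icc a b := ⟨hax, by linarith⟩
  have hxu : x + u ∈ Set.Icc a b := ⟨by linarith, by linarith⟩
  have hxuv : x + u + v ∈ Set.Icc a b := ⟨by linarith, hxb⟩
  have hfirst : 0 ≤ V (x + u) - V x := sub_nonneg.mpr (hV hx hxu (by linarith))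
  have hsecond : 0 ≤ V (x + u + v) - V (x + u) := sub_nonneg.mpr (hV hxu hxuv (by linarith))
  calc (V (x + u + v) - V x) ^ p
      = ((V (x + u) - V x) + (V (x + u + v) - V (x + u))) ^ p := by ring_nf
    _ ≤ (V (x + u) - V x) ^ p + (V (x + u + v) - V (x + u)) ^ p :=
        Real.rpow_add_le_add_rpow hfirst hsecond hp hp1
    _ ≤ incrementSup V p a b u + incrementSup V p a b v :=
        add_le_add (le_incrementSup hV hp hu hax hxu.2) (le_incrementSup hV hp hv hxu.1 hxb)

end Increments

theorem stmt_10_general (r a b : ℝ) (hr : 1 ≤ r) (f : ℝ → ℝ)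
    (hbv : BddAbove (rVarSums r a b f)) (Φ : ℝ → ℝ)
    (hΦ : ∀ u, Φ u = sSup {t | ∃ x : ℝ, a ≤ x ∧ x + u ≤ b ∧
      t = (sSup (rVarSums r a (x + u) f) - sSup (rVarSums r a x f)) ^ (1 / r)}) :
    ∀ u v : ℝ, 0 ≤ u → 0 ≤ v → u + v ≤ b - a → Φ (u + v) ≤ Φ u + Φ v := by
  intro u v hu hv huv
  have hΦ' : ∀ w, Φ w = incrementSup (fun x => sSup (rVarSums r a x f)) (1 / r) a b w := hΦ
  have hp : 0 ≤ 1 / r := by positivity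
  have hp1 : 1 / r ≤ 1 := (div_le_one (by linarith)).mpr hr
  rw [hΦ', hΦ', hΦ']
  exact incrementSup_add_le (monotoneOn_sSup_rVarSums hbv) hp hp1 hu hv huv

theorem stmt_10 (r a b : ℝ) (hr : 1 ≤ r) (hab : a < b) (f : ℝ → ℝ)
    (hbv : BddAbove (rVarSums r a b f)) (Φ : ℝ → ℝ)
    (hΦ : ∀ u, Φ u = sSup {t | ∃ x : ℝ, a ≤ x ∧ x + u ≤ b ∧
      t = (sSup (rVarSums r a (x + u) f) - sSup (rVarSums r a x f)) ^ (1 / r)}) :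
    ∀ u v : ℝ, 0 ≤ u → 0 ≤ v → u + v ≤ b - a → Φ (u + v) ≤ Φ u + Φ v :=
  stmt_10_general r a b hr f hbv Φ hΦ
end

section
/- Let r > 0 and Φ : [0, b-a] → ℝ₊ be such that Φ^r is superadditive (Φ^r(u) + Φ^r(v) ≤ Φ^r(u+v)). Then every Φ-Hölder function f : [a,b] → ℝ is of r-bounded variation, with V^r_{[a,b]}(f) ≤ Φ^r(b-a). -/
open Finset

theorem Finset.sum_le_of_superadditiveOn {ι : Type*} {g : ℝ → ℝ} {L : ℝ} (hg₀ : 0 ≤ g 0)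
    (hg : ∀ u v : ℝ, 0 ≤ u → 0 ≤ v → u + v ≤ L → g u + g v ≤ g (u + v))
    (s : Finset ι) {d : ι → ℝ} (hd : ∀ i ∈ s, 0 ≤ d i) (hL : ∑ i ∈ s, d i ≤ L) :
    ∑ i ∈ s, g (d i) ≤ g (∑ i ∈ s, d i) := by
  classical
  induction s using Finset.induction_on with
  | empty => simpa using hg₀
  | insert j s hj ih =>
    simp only [sum_insert hj] at hL ⊢
    have hs : 0 ≤ ∑ i ∈ s, d i := sum_nonneg fun i hi ↦ hd i (mem_insert_of_mem hi)
    have hdj : 0 ≤ d j := hd j (mem_insert_self j s)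
    calc g (d j) + ∑ i ∈ s, g (d i)
        ≤ g (d j) + g (∑ i ∈ s, d i) :=
          add_le_add le_rfl (ih (fun i hi ↦ hd i (mem_insert_of_mem hi)) (by linarith))
      _ ≤ g (d j + ∑ i ∈ s, d i) := hg _ _ hdj hs hL

theorem mem_Icc_of_strictMono_partition {a b : ℝ} {n : ℕ} {x : ℕ → ℝ} (hx₀ : x 0 = a)
    (hxn : x n = b) (hx : ∀ i, i < n → x i < x (i + 1)) {i : ℕ} (hi : i ≤ n) :
    x i ∈ Set.Icc a b := by
  have hmono : MonotoneOn x (Set.Iic n) :=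
    monotoneOn_of_le_succ Set.ordConnected_Iic fun j _ _ hj ↦ by
      rw [Order.succ_eq_add_one] at hj ⊢
      exact (hx j (Nat.lt_of_succ_le hj)).le
  exact ⟨hx₀ ▸ hmono (Set.mem_Iic.2 (Nat.zero_le n)) hi (Nat.zero_le i),
    hxn ▸ hmono hi (Set.mem_Iic.2 le_rfl) hi⟩

theorem le_of_mem_rVarSums {r a b : ℝ} (hr : 0 ≤ r) {Φ : ℝ → ℝ}
    (hnonneg : ∀ u ∈ Set.Icc (0:ℝ) (b - a), 0 ≤ Φ u)
    (hsuper : ∀ u v : ℝ, 0 ≤ u → 0 ≤ v → u + v ≤ b - a →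
      Φ u ^ r + Φ v ^ r ≤ Φ (u + v) ^ r)
    {f : ℝ → ℝ} (hf : ∀ x ∈ Set.Icc a b, ∀ y ∈ Set.Icc a b, |f x - f y| ≤ Φ |x - y|)
    {s : ℝ} (hs : s ∈ rVarSums r a b f) : s ≤ Φ (b - a) ^ r := by
  obtain ⟨n, x, hx₀, hxn, hx, rfl⟩ := hs
  have hab : a ≤ b := hxn ▸ (mem_Icc_of_strictMono_partition hx₀ hxn hx le_rfl).1
  have hlength : ∑ i ∈ range n, (x (i + 1) - x i) = b - a := by
    rw [sum_range_sub, hx₀, hxn]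
  have hterm : ∀ i ∈ range n, |f (x (i + 1)) - f (x i)| ^ r ≤ Φ (x (i + 1) - x i) ^ r := by
    intro i hi
    have hin := mem_range.1 hi
    have hHolder := hf _ (mem_Icc_of_strictMono_partition hx₀ hxn hx hin)
      _ (mem_Icc_of_strictMono_partition hx₀ hxn hx hin.le)
    rw [abs_of_pos (sub_pos.2 (hx i hin))] at hHolder
    exact Real.rpow_le_rpow (abs_nonneg _) hHolder hr
  calc ∑ i ∈ range n, |f (x (i + 1)) - f (x i)| ^ r
      ≤ ∑ i ∈ range n, Φ (x (i + 1) - x i) ^ r := sum_le_sum hterm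
    _ ≤ Φ (∑ i ∈ range n, (x (i + 1) - x i)) ^ r :=
        sum_le_of_superadditiveOn (g := fun u ↦ Φ u ^ r)
          (Real.rpow_nonneg (hnonneg 0 ⟨le_rfl, sub_nonneg.2 hab⟩) r) hsuper (range n)
          (fun i hi ↦ (sub_pos.2 (hx i (mem_range.1 hi))).le) hlength.le
    _ = Φ (b - a) ^ r := by rw [hlength]

theorem stmt_16 (r a b : ℝ) (hr : 0 < r) (hab : a < b) (Φ : ℝ → ℝ)
    (hnonneg : ∀ u ∈ Set.Icc (0:ℝ) (b - a), 0 ≤ Φ u)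
    (hsuper : ∀ u v : ℝ, 0 ≤ u → 0 ≤ v → u + v ≤ b - a →
      Φ u ^ r + Φ v ^ r ≤ Φ (u + v) ^ r)
    (f : ℝ → ℝ) (hf : ∀ x ∈ Set.Icc a b, ∀ y ∈ Set.Icc a b, |f x - f y| ≤ Φ |x - y|) :
    BddAbove (rVarSums r a b f) ∧ sSup (rVarSums r a b f) ≤ Φ (b - a) ^ r := by
  have hbound : ∀ s ∈ rVarSums r a b f, s ≤ Φ (b - a) ^ r :=
    fun _ ↦ le_of_mem_rVarSums hr.le hnonneg hsuper hf
  have hΦ : 0 ≤ Φ (b - a) ^ r := Real.rpow_nonneg (hnonneg _ ⟨sub_nonneg.2 hab.le, le_rfl⟩) r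
  exact ⟨⟨_, hbound⟩, Real.sSup_le hbound hΦ⟩
end
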